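/- For N a non-negative integer and ν ∈ {0,1}: as polynomials in q, the generating function Σ_π q^{|π|} z^{γ(π)} over partitions π into distinct parts ≤ 2N+ν equals Σ_{l=0}^{N} [N choose l]_{q⁴} (−zq;q⁴)_{N−l+ν} (−q/z;q⁴)_l (zq)^{2l}, where γ(π) is the alternating sum of parts of π. Equivalently, the Rogers–Szegő polynomial H_{2N+ν}(zq, q²) = Σ_{l=0}^{2N+ν} [2N+ν choose l]_{q²}(zq)^l equals Σ_{l=0}^{N} [N choose l]_{q⁴} (−zq;q⁴)_{N−l+ν}(−q/z;q⁴)_l (zq)^{2l}. -/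

import Mathlib

/-!
Write `H_M(x, y) = ∑ₗ [M choose l]_p xˡ y^(M-l)`. The second q-Pascal rule gives
`H_{M+1}(x, y) = y H_M(x, y) + x H_M(x, p y)`, and `H_M` is symmetric and homogeneous of
degree `M`.

A distinct partition with parts `≤ M + 1` either avoids `M + 1` or is `M + 1` on top of a
partition with parts `≤ M`, whose alternating sum `γ` then becomes `M + 1 - γ`. Hence
`∑ q^|π| a^γ b^(M-γ)` obeys the same recursion as `H_M(q a, b)` with `p = q²` (by symmetry and
homogeneity), which gives the combinatorial side.

Both recursions combine into `H_{M+2} = (1 + x) H_{M+1} - (1 - p^(M+1)) x H_M` at `y = 1`. The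
paired sum satisfies this recurrence: in the odd step by
`(1 - s^(N+1-l)) [N+1 choose l]_s = (1 - s^(N+1)) [N choose l]_s`, and in the even step by the
second q-Pascal rule (with `s = p²`); so it agrees with `H_{2N+ν}`.
-/

def IsDistinctPartition (π : List ℕ) : Prop :=
  π.Chain' (· > ·) ∧ ∀ p ∈ π, 0 < p

def IsPartition (π : List ℕ) : Prop :=
  π.Chain' (· ≥ ·) ∧ ∀ p ∈ π, 0 < p

def oddIdxOdd (π : List ℕ) : ℕ :=
  ((π.zipIdx.map Prod.swap).filter fun p => p.1 % 2 == 0 && p.2 % 2 == 1).length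

def evenIdxOdd (π : List ℕ) : ℕ :=
  ((π.zipIdx.map Prod.swap).filter fun p => p.1 % 2 == 1 && p.2 % 2 == 1).length

def bgRank (π : List ℕ) : ℤ := (oddIdxOdd π : ℤ) - evenIdxOdd π

def altSum : List ℕ → ℤ
  | [] => 0
  | a :: t => (a : ℤ) - altSum t

noncomputable def gaussPoly : ℕ → ℕ → Polynomial ℚ
  | _, 0 => 1
  | 0, _ + 1 => 0
  | m + 1, r + 1 => gaussPoly m r + Polynomial.X ^ (r + 1) * gaussPoly m (r + 1)

noncomputable def gaussZ (m : ℕ) (r : ℤ) : Polynomial ℚ :=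
  if 0 ≤ r then gaussPoly m r.toNat else 0

noncomputable def q16 : LaurentPolynomial (Polynomial ℚ) :=
  LaurentPolynomial.C Polynomial.X

noncomputable def z16 : LaurentPolynomial (Polynomial ℚ) := LaurentPolynomial.T 1

/-- the common right-hand side -/
noncomputable def rhs16 (N ν : ℕ) : LaurentPolynomial (Polynomial ℚ) :=
  ∑ l ∈ Finset.range (N + 1),
    Polynomial.aeval (q16 ^ 4) (gaussPoly N l) *
      (∏ m ∈ Finset.range (N - l + ν), (1 + z16 * q16 * (q16 ^ 4) ^ m)) *
      (∏ m ∈ Finset.range l, (1 + q16 * LaurentPolynomial.T (-1) * (q16 ^ 4) ^ m)) *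
      (z16 * q16) ^ (2 * l)

open Polynomial Finset

theorem gaussPoly_zero_right (m : ℕ) : gaussPoly m 0 = 1 := by cases m <;> rfl

theorem gaussPoly_succ_succ (m r : ℕ) :
    gaussPoly (m + 1) (r + 1) = gaussPoly m r + X ^ (r + 1) * gaussPoly m (r + 1) := rfl

theorem gaussPoly_of_lt {m r : ℕ} (h : m < r) : gaussPoly m r = 0 := by
  induction m generalizing r with
  | zero => obtain ⟨r, rfl⟩ := Nat.exists_eq_add_one_of_ne_zero h.ne'; rfl
  | succ m ih =>
    obtain ⟨r, rfl⟩ := Nat.exists_eq_add_one_of_ne_zero (Nat.ne_zero_of_lt h)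
    rw [gaussPoly_succ_succ, ih (by omega), ih (by omega), mul_zero, add_zero]

theorem gaussPoly_self (m : ℕ) : gaussPoly m m = 1 := by
  induction m with
  | zero => rfl
  | succ m ih =>
    rw [gaussPoly_succ_succ, ih, gaussPoly_of_lt (Nat.lt_succ_self m), mul_zero, add_zero]

theorem gaussPoly_add_succ_succ (m r : ℕ) :
    gaussPoly (m + r + 1) (r + 1) = X ^ m * gaussPoly (m + r) r + gaussPoly (m + r) (r + 1) := by
  induction r generalizing m with
  | zero =>
    simp only [add_zero, zero_add, gaussPoly_zero_right, mul_one]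
    induction m with
    | zero => rw [gaussPoly_self, gaussPoly_of_lt zero_lt_one, pow_zero, add_zero]
    | succ m ih =>
      linear_combination gaussPoly_succ_succ (m + 1) 0 + X * ih - gaussPoly_succ_succ m 0
        + gaussPoly_zero_right (m + 1) - gaussPoly_zero_right m
  | succ r ih =>
    induction m with
    | zero =>
      simp only [zero_add, gaussPoly_self, gaussPoly_of_lt (Nat.lt_succ_self _), pow_zero]
      ring
    | succ m ih' =>
      have h₁ := ih (m + 1)
      rw [show m + 1 + r + 1 = m + r + 2 by ring, show m + 1 + r = m + r + 1 by ring] at h₁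
      rw [show m + (r + 1) + 1 = m + r + 2 by ring, show m + (r + 1) = m + r + 1 by ring] at ih'
      rw [show m + 1 + (r + 1) + 1 = m + r + 2 + 1 by ring,
        show m + 1 + (r + 1) = m + r + 2 by ring]
      linear_combination gaussPoly_succ_succ (m + r + 2) (r + 1) + h₁ + X ^ (r + 2) * ih'
        - X ^ (m + 1) * gaussPoly_succ_succ (m + r + 1) r
        - gaussPoly_succ_succ (m + r + 1) (r + 1)

theorem gaussPoly_succ_succ' (m r : ℕ) :
    gaussPoly (m + 1) (r + 1) = X ^ (m - r) * gaussPoly m r + gaussPoly m (r + 1) := by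
  rcases le_or_gt r m with h | h
  · obtain ⟨k, rfl⟩ := Nat.exists_eq_add_of_le' h
    rw [Nat.add_sub_cancel, gaussPoly_add_succ_succ]
  · rw [gaussPoly_of_lt h, gaussPoly_of_lt (by omega), gaussPoly_of_lt (by omega)]
    ring

theorem one_sub_X_pow_mul_gaussPoly (m l : ℕ) :
    (1 - X ^ (m + 1 - l)) * gaussPoly (m + 1) l = (1 - X ^ (m + 1)) * gaussPoly m l := by
  rcases l with _ | r
  · simp [gaussPoly_zero_right]
  rcases le_or_gt r m with h | h
  · obtain ⟨k, rfl⟩ := Nat.exists_eq_add_of_le' h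
    rw [show k + r + 1 - (r + 1) = k by omega]
    linear_combination gaussPoly_add_succ_succ k r - X ^ k * gaussPoly_succ_succ (k + r) r
  · rw [gaussPoly_of_lt (show m + 1 < r + 1 by omega), gaussPoly_of_lt (show m < r + 1 by omega)]
    ring

section RogersSzego

variable {R : Type*} [CommRing R] [Algebra ℚ R]

/-- Homogenized Rogers–Szegő polynomial: the paper's `H_M(x, p)` is `rogersSzego p M x 1`. -/
noncomputable def rogersSzego (p : R) (M : ℕ) (x y : R) : R :=
  ∑ l ∈ range (M + 1), aeval p (gaussPoly M l) * x ^ l * y ^ (M - l)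

theorem rogersSzego_zero (p x y : R) : rogersSzego p 0 x y = 1 := by
  simp [rogersSzego, gaussPoly_zero_right]

theorem rogersSzego_one_right (p x : R) (M : ℕ) :
    rogersSzego p M x 1 = ∑ l ∈ range (M + 1), aeval p (gaussPoly M l) * x ^ l := by
  simp only [rogersSzego, one_pow, mul_one]

theorem rogersSzego_succ_eq_add_sum (p x y : R) (M : ℕ) :
    rogersSzego p (M + 1) x y =
      y ^ (M + 1) + ∑ j ∈ range (M + 1),
        aeval p (gaussPoly (M + 1) (j + 1)) * x ^ (j + 1) * y ^ (M - j) := by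
  rw [rogersSzego, sum_range_succ', add_comm]
  simp [gaussPoly_zero_right]

theorem mul_rogersSzego_eq_add_sum (p x y : R) (M : ℕ) :
    y * rogersSzego p M x y =
      y ^ (M + 1) + ∑ j ∈ range (M + 1),
        aeval p (gaussPoly M (j + 1)) * x ^ (j + 1) * y ^ (M - j) := by
  rw [sum_range_succ, gaussPoly_of_lt (Nat.lt_succ_self M), rogersSzego, mul_sum, sum_range_succ']
  simp only [map_zero, zero_mul, add_zero, gaussPoly_zero_right, map_one, pow_zero, one_mul,
    Nat.sub_zero]
  rw [add_comm, ← pow_succ']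
  congr 1
  refine sum_congr rfl fun j hj => ?_
  rw [show M - j = M - (j + 1) + 1 by have := mem_range.1 hj; omega, pow_succ]
  ring

theorem rogersSzego_succ (p x y : R) (M : ℕ) :
    rogersSzego p (M + 1) x y = y * rogersSzego p M x y + x * rogersSzego p M x (p * y) := by
  rw [rogersSzego_succ_eq_add_sum, mul_rogersSzego_eq_add_sum, rogersSzego, mul_sum, add_assoc,
    ← sum_add_distrib]
  congr 1
  refine sum_congr rfl fun j _ => ?_
  rw [gaussPoly_succ_succ', map_add, map_mul, map_pow, aeval_X]
  ring

theorem rogersSzego_succ' (p x y : R) (M : ℕ) :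
    rogersSzego p (M + 1) x y = x * rogersSzego p M x y + y * rogersSzego p M (p * x) y := by
  rw [rogersSzego_succ_eq_add_sum, mul_rogersSzego_eq_add_sum, rogersSzego, mul_sum, add_left_comm,
    ← sum_add_distrib]
  congr 1
  refine sum_congr rfl fun j _ => ?_
  rw [gaussPoly_succ_succ, map_add, map_mul, map_pow, aeval_X]
  ring

theorem rogersSzego_comm (p x y : R) (M : ℕ) : rogersSzego p M x y = rogersSzego p M y x := by
  induction M generalizing x y with
  | zero => rw [rogersSzego_zero, rogersSzego_zero]
  | succ M ih => rw [rogersSzego_succ, rogersSzego_succ' p y x, ih y x, ih (p * y) x]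

theorem rogersSzego_mul_mul (p c x y : R) (M : ℕ) :
    rogersSzego p M (c * x) (c * y) = c ^ M * rogersSzego p M x y := by
  rw [rogersSzego, rogersSzego, mul_sum]
  refine sum_congr rfl fun l hl => ?_
  obtain ⟨k, rfl⟩ := Nat.exists_eq_add_of_le (Nat.lt_succ_iff.1 (mem_range.1 hl))
  rw [Nat.add_sub_cancel_left]
  ring

theorem rogersSzego_add_two (p x y : R) (M : ℕ) :
    rogersSzego p (M + 2) x y =
      (x + y) * rogersSzego p (M + 1) x y - (1 - p ^ (M + 1)) * x * y * rogersSzego p M x y := by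
  linear_combination rogersSzego_succ p x y (M + 1) + x * rogersSzego_succ' p x (p * y) M
    + x * p * y * rogersSzego_mul_mul p p x y M - x * rogersSzego_succ p x y M

/-- The paper's right-hand side in the variables `x = zq`, `p = q²`; its factor
`(-q/z; q⁴)_l (zq)^(2l)` becomes `(∏_{m<l} (x + p^(2m+1))) * xˡ`. -/
noncomputable def pairedSum (p x : R) (N ν : ℕ) : R :=
  ∑ l ∈ range (N + 1), aeval (p ^ 2) (gaussPoly N l) *
    (∏ m ∈ range (N - l + ν), (1 + x * (p ^ 2) ^ m)) *
      (∏ m ∈ range l, (x + p * (p ^ 2) ^ m)) * x ^ l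

theorem pairedSum_one_eq (p x : R) (N : ℕ) :
    pairedSum p x N 1 = ∑ l ∈ range (N + 2), aeval (p ^ 2) (gaussPoly N l) *
      (∏ m ∈ range (N + 1 - l), (1 + x * (p ^ 2) ^ m)) *
        (∏ m ∈ range l, (x + p * (p ^ 2) ^ m)) * x ^ l := by
  rw [sum_range_succ, gaussPoly_of_lt (Nat.lt_succ_self N), map_zero, zero_mul, zero_mul, zero_mul,
    add_zero, pairedSum]
  refine sum_congr rfl fun l hl => ?_
  rw [show N - l + 1 = N + 1 - l by have := mem_range.1 hl; omega]

theorem pairedSum_succ_one (p x : R) (N : ℕ) :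
    pairedSum p x (N + 1) 1 =
      (1 + x) * pairedSum p x (N + 1) 0 - (1 - (p ^ 2) ^ (N + 1)) * x * pairedSum p x N 1 := by
  rw [pairedSum_one_eq p x N, pairedSum, pairedSum, mul_sum, mul_sum, ← sum_sub_distrib]
  refine sum_congr rfl fun l _ => ?_
  have h := congrArg (aeval (p ^ 2)) (one_sub_X_pow_mul_gaussPoly N l)
  simp only [map_mul, map_sub, map_one, map_pow, aeval_X] at h
  rw [prod_range_succ, add_zero]
  linear_combination (-x * (∏ m ∈ range (N + 1 - l), (1 + x * (p ^ 2) ^ m)) *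
    (∏ m ∈ range l, (x + p * (p ^ 2) ^ m)) * x ^ l) * h

theorem pairedSum_succ_zero (p x : R) (N : ℕ) :
    pairedSum p x (N + 1) 0 =
      (1 + x) * pairedSum p x N 1 - (1 - p * (p ^ 2) ^ N) * x * pairedSum p x N 0 := by
  calc pairedSum p x (N + 1) 0
      = pairedSum p x N 1 + ∑ j ∈ range (N + 1),
          (p ^ 2) ^ (N - j) * aeval (p ^ 2) (gaussPoly N j) *
            (∏ m ∈ range (N - j), (1 + x * (p ^ 2) ^ m)) *
              (∏ m ∈ range (j + 1), (x + p * (p ^ 2) ^ m)) * x ^ (j + 1) := by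
        rw [← sub_eq_iff_eq_add', pairedSum, pairedSum_one_eq, ← sum_sub_distrib,
          sum_range_succ']
        simp only [gaussPoly_zero_right, sub_self, add_zero, Nat.add_sub_add_right,
          gaussPoly_succ_succ', map_add, map_mul, map_pow, aeval_X, ← sub_mul,
          add_sub_cancel_right]
    _ = pairedSum p x N 1 +
          (x * pairedSum p x N 1 - (1 - p * (p ^ 2) ^ N) * x * pairedSum p x N 0) := by
        rw [pairedSum, pairedSum, mul_sum, mul_sum, ← sum_sub_distrib]
        congr 1
        refine sum_congr rfl fun j hj => ?_
        obtain ⟨k, rfl⟩ := Nat.exists_eq_add_of_le (Nat.lt_succ_iff.1 (mem_range.1 hj))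
        rw [Nat.add_sub_cancel_left, prod_range_succ, prod_range_succ, add_zero]
        ring
    _ = _ := by ring

theorem rogersSzego_eq_pairedSum (p x : R) {N ν : ℕ} (hν : ν ≤ 1) :
    rogersSzego p (2 * N + ν) x 1 = pairedSum p x N ν := by
  have key : ∀ N, rogersSzego p (2 * N) x 1 = pairedSum p x N 0 ∧
      rogersSzego p (2 * N + 1) x 1 = pairedSum p x N 1 := by
    intro N
    induction N with
    | zero =>
      simp [rogersSzego_succ, rogersSzego_zero, pairedSum, gaussPoly_zero_right]
    | succ N ih =>
      have h₀ : rogersSzego p (2 * (N + 1)) x 1 = pairedSum p x (N + 1) 0 := by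
        rw [show 2 * (N + 1) = 2 * N + 2 by ring, rogersSzego_add_two, ih.1, ih.2,
          pairedSum_succ_zero]
        ring
      refine ⟨h₀, ?_⟩
      rw [show 2 * (N + 1) + 1 = 2 * N + 1 + 2 by ring, rogersSzego_add_two, ih.2,
        show 2 * N + 1 + 1 = 2 * (N + 1) by ring, h₀, pairedSum_succ_one]
      ring
  interval_cases ν
  exacts [(key N).1, (key N).2]

end RogersSzego

def distinctPartitionsLE : ℕ → Finset (List ℕ)
  | 0 => {[]}
  | M + 1 => distinctPartitionsLE M ∪
      (distinctPartitionsLE M).map ⟨List.cons (M + 1), List.cons_injective⟩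

theorem mem_distinctPartitionsLE_succ {M : ℕ} {π : List ℕ} :
    π ∈ distinctPartitionsLE (M + 1) ↔
      π ∈ distinctPartitionsLE M ∨ ∃ τ ∈ distinctPartitionsLE M, (M + 1) :: τ = π := by
  simp [distinctPartitionsLE]

theorem isDistinctPartition_iff {π : List ℕ} :
    IsDistinctPartition π ↔ π.Pairwise (· > ·) ∧ ∀ p ∈ π, 0 < p :=
  and_congr_left' List.isChain_iff_pairwise

theorem isDistinctPartition_nil : IsDistinctPartition [] := by
  simp [isDistinctPartition_iff]

theorem isDistinctPartition_cons {a : ℕ} {τ : List ℕ} :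
    IsDistinctPartition (a :: τ) ↔
      (∀ b ∈ τ, b < a) ∧ 0 < a ∧ IsDistinctPartition τ := by
  simp only [isDistinctPartition_iff, List.pairwise_cons, List.mem_cons, forall_eq_or_imp]
  tauto

theorem mem_distinctPartitionsLE {M : ℕ} {π : List ℕ} :
    π ∈ distinctPartitionsLE M ↔ IsDistinctPartition π ∧ ∀ p ∈ π, p ≤ M := by
  induction M generalizing π with
  | zero =>
    rcases π with _ | ⟨a, τ⟩
    · simp [distinctPartitionsLE, isDistinctPartition_nil]
    · simp only [distinctPartitionsLE, mem_singleton, reduceCtorEq, false_iff, not_and,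
        isDistinctPartition_cons]
      exact fun h hle => (h.2.1.trans_le (hle a List.mem_cons_self)).false
  | succ M ih =>
    rw [mem_distinctPartitionsLE_succ, ih]
    constructor
    · rintro (⟨hπ, hle⟩ | ⟨τ, hτ, rfl⟩)
      · exact ⟨hπ, fun p hp => (hle p hp).trans M.le_succ⟩
      · rw [ih] at hτ
        refine ⟨isDistinctPartition_cons.2
          ⟨fun b hb => Nat.lt_succ_of_le (hτ.2 b hb), M.succ_pos, hτ.1⟩, ?_⟩
        simp only [List.mem_cons, forall_eq_or_imp, le_refl, true_and]
        exact fun p hp => (hτ.2 p hp).trans M.le_succ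
    · rintro ⟨hπ, hle⟩
      rcases π with _ | ⟨a, τ⟩
      · exact Or.inl ⟨hπ, by simp⟩
      rw [isDistinctPartition_cons] at hπ
      have ha := hle a List.mem_cons_self
      rcases Nat.lt_or_eq_of_le ha with ha | rfl
      · left
        refine ⟨isDistinctPartition_cons.2 hπ, ?_⟩
        simp only [List.mem_cons, forall_eq_or_imp]
        exact ⟨Nat.le_of_lt_succ ha, fun b hb => by have := hπ.1 b hb; omega⟩
      · exact Or.inr ⟨τ, ih.2 ⟨hπ.2.2, fun b hb => Nat.le_of_lt_succ (hπ.1 b hb)⟩, rfl⟩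

theorem altSum_mem_Icc {M : ℕ} {π : List ℕ} (hπ : π ∈ distinctPartitionsLE M) :
    0 ≤ altSum π ∧ altSum π ≤ M := by
  induction M generalizing π with
  | zero => simp [distinctPartitionsLE] at hπ; simp [hπ, altSum]
  | succ M ih =>
    rcases mem_distinctPartitionsLE_succ.1 hπ with hπ | ⟨τ, hτ, rfl⟩
    · have := ih hπ; push_cast; omega
    · have := ih hτ; simp only [altSum]; push_cast; omega

theorem two_mul_sum_le {M : ℕ} {π : List ℕ} (hπ : π ∈ distinctPartitionsLE M) :
    2 * π.sum ≤ M * (M + 1) := by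
  induction M generalizing π with
  | zero => simp [distinctPartitionsLE] at hπ; simp [hπ]
  | succ M ih =>
    rcases mem_distinctPartitionsLE_succ.1 hπ with hπ | ⟨τ, hτ, rfl⟩
    · nlinarith [ih hπ]
    · rw [List.sum_cons]; nlinarith [ih hτ]

noncomputable def altSumGenFun {R : Type*} [CommSemiring R] (q a b : R) (M : ℕ) : R :=
  ∑ π ∈ distinctPartitionsLE M,
    q ^ π.sum * a ^ (altSum π).toNat * b ^ (M - (altSum π).toNat)

theorem altSumGenFun_zero {R : Type*} [CommSemiring R] (q a b : R) : altSumGenFun q a b 0 = 1 := by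
  simp [altSumGenFun, distinctPartitionsLE, altSum]

/-- Putting the part `M + 1` on top turns `γ` into `M + 1 - γ`, which swaps the roles of `a`
and `b`. -/
theorem altSumGenFun_succ {R : Type*} [CommSemiring R] (q a b : R) (M : ℕ) :
    altSumGenFun q a b (M + 1) =
      b * altSumGenFun q a b M + q ^ (M + 1) * a * altSumGenFun q b a M := by
  have hdisj : Disjoint (distinctPartitionsLE M)
      ((distinctPartitionsLE M).map ⟨List.cons (M + 1), List.cons_injective⟩) := by
    simp only [disjoint_left, mem_map, Function.Embedding.coeFn_mk, not_exists, not_and]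
    intro π hπ τ _ hτπ
    have := (mem_distinctPartitionsLE.1 hπ).2 (M + 1) (hτπ ▸ List.mem_cons_self)
    omega
  rw [altSumGenFun, distinctPartitionsLE, sum_union hdisj, sum_map, altSumGenFun, altSumGenFun,
    mul_sum, mul_sum]
  congr 1
  · refine sum_congr rfl fun π hπ => ?_
    have := altSum_mem_Icc hπ
    rw [show M + 1 - (altSum π).toNat = M - (altSum π).toNat + 1 by omega, pow_succ]
    ring
  · refine sum_congr rfl fun τ hτ => ?_
    have := altSum_mem_Icc hτ
    simp only [Function.Embedding.coeFn_mk, List.sum_cons, altSum]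
    rw [show ((M + 1 : ℕ) - altSum τ).toNat = M - (altSum τ).toNat + 1 by omega,
      show M + 1 - (M - (altSum τ).toNat + 1) = (altSum τ).toNat by omega]
    ring

theorem altSumGenFun_eq_rogersSzego {R : Type*} [CommRing R] [Algebra ℚ R] (q a b : R) (M : ℕ) :
    altSumGenFun q a b M = rogersSzego (q ^ 2) M (q * a) b := by
  induction M generalizing a b with
  | zero => rw [altSumGenFun_zero, rogersSzego_zero]
  | succ M ih =>
    have hswap : rogersSzego (q ^ 2) M (q * a) (q ^ 2 * b) =
        q ^ M * rogersSzego (q ^ 2) M (q * b) a := by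
      rw [show q ^ 2 * b = q * (q * b) by ring, rogersSzego_mul_mul, rogersSzego_comm]
    rw [altSumGenFun_succ, ih, ih, rogersSzego_succ, hswap]
    ring

theorem card_distinctPartitions (M n k : ℕ) :
    Nat.card {π : List ℕ // IsDistinctPartition π ∧ (∀ p ∈ π, p ≤ M) ∧
        π.sum = n ∧ altSum π = (k : ℤ)} =
      #{π ∈ distinctPartitionsLE M | (π.sum, (altSum π).toNat) = (n, k)} := by
  rw [← Nat.card_eq_finsetCard]
  refine Nat.card_congr (Equiv.subtypeEquivRight fun π => ?_)
  rw [mem_filter, mem_distinctPartitionsLE, Prod.mk.injEq]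
  constructor
  · rintro ⟨hπ, hle, hsum, halt⟩
    exact ⟨⟨hπ, hle⟩, hsum, by omega⟩
  · rintro ⟨hmem, hsum, halt⟩
    have := altSum_mem_Icc (mem_distinctPartitionsLE.2 hmem)
    exact ⟨hmem.1, hmem.2, hsum, by omega⟩

theorem sum_card_distinctPartitions {R : Type*} [CommSemiring R] (q z : R) (M : ℕ) :
    ∑ n ∈ range (M * (M + 1) / 2 + 1), ∑ k ∈ range (M + 1),
        (Nat.card {π : List ℕ // IsDistinctPartition π ∧ (∀ p ∈ π, p ≤ M) ∧
          π.sum = n ∧ altSum π = (k : ℤ)} : R) * q ^ n * z ^ k = altSumGenFun q z 1 M := by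
  have hmaps : ∀ π ∈ distinctPartitionsLE M,
      (π.sum, (altSum π).toNat) ∈ range (M * (M + 1) / 2 + 1) ×ˢ range (M + 1) := by
    intro π hπ
    have := two_mul_sum_le hπ
    have := altSum_mem_Icc hπ
    simp only [mem_product, mem_range]
    omega
  simp only [altSumGenFun, one_pow, mul_one]
  rw [← sum_fiberwise_of_maps_to' hmaps fun nk => q ^ nk.1 * z ^ nk.2, sum_product]
  refine sum_congr rfl fun n _ => sum_congr rfl fun k _ => ?_
  rw [card_distinctPartitions, sum_const, nsmul_eq_mul, mul_assoc]

theorem prod_range_one_add_mul_mul_pow {R : Type*} [CommRing R] {u v w : R} (h : u * v = w)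
    (c : ℕ → R) (l : ℕ) :
    (∏ m ∈ range l, (1 + u * c m)) * v ^ l = ∏ m ∈ range l, (v + w * c m) := by
  rw [← card_range l, ← prod_const, card_range, ← prod_mul_distrib]
  refine prod_congr rfl fun m _ => ?_
  linear_combination c m * h

theorem rhs16_eq_pairedSum (N ν : ℕ) : rhs16 N ν = pairedSum (q16 ^ 2) (z16 * q16) N ν := by
  have hu : q16 * LaurentPolynomial.T (-1) * (z16 * q16) = q16 ^ 2 := by
    have hT : (LaurentPolynomial.T (-1) * z16 : LaurentPolynomial ℚ[X]) = 1 := by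
      rw [z16, ← LaurentPolynomial.T_add, neg_add_cancel, LaurentPolynomial.T_zero]
    linear_combination q16 ^ 2 * hT
  rw [rhs16, pairedSum, show (q16 ^ 2) ^ 2 = q16 ^ 4 by ring]
  refine sum_congr rfl fun l _ => ?_
  linear_combination aeval (q16 ^ 4) (gaussPoly N l) *
    (∏ m ∈ range (N - l + ν), (1 + z16 * q16 * (q16 ^ 4) ^ m)) * (z16 * q16) ^ l *
      prod_range_one_add_mul_mul_pow hu (fun m => (q16 ^ 4) ^ m) l

theorem stmt16 (N ν : ℕ) (hν : ν ≤ 1) :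
    ((∑ n ∈ Finset.range ((2 * N + ν) * (2 * N + ν + 1) / 2 + 1),
        ∑ k ∈ Finset.range (2 * N + ν + 1),
          (Nat.card {π : List ℕ // IsDistinctPartition π ∧ (∀ p ∈ π, p ≤ 2 * N + ν) ∧
              π.sum = n ∧ altSum π = (k : ℤ)} : LaurentPolynomial (Polynomial ℚ)) *
            q16 ^ n * z16 ^ k)
      = rhs16 N ν)
    ∧ ((∑ l ∈ Finset.range (2 * N + ν + 1),
          Polynomial.aeval (q16 ^ 2) (gaussPoly (2 * N + ν) l) * (z16 * q16) ^ l)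
      = rhs16 N ν) := by
  have hH : rogersSzego (q16 ^ 2) (2 * N + ν) (z16 * q16) 1 = rhs16 N ν := by
    rw [rhs16_eq_pairedSum, rogersSzego_eq_pairedSum _ _ hν]
  constructor
  · rw [sum_card_distinctPartitions, altSumGenFun_eq_rogersSzego, mul_comm q16, hH]
  · rw [← rogersSzego_one_right, hH]
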